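/- Let B be a finitely generated projective R-algebra and suppose σ: B → B is an R-linear map with σ(1) = 1 such that x·σ(x) ∈ R for all x ∈ B. Then σ is a standard involution on B; in particular σ(xy) = σ(y)σ(x) and σ(σ(x)) = x for all x, y ∈ B. -/

import Mathlib

/-- `σ` is a standard involution on the `R`-algebra `B`: an `R`-linear anti-automorphism
with `σ(1) = 1`, `σ² = id`, and `x·σ(x) ∈ R` for all `x`. -/
def IsStandardInvolution (R : Type*) {B : Type*} [CommRing R] [Ring B] [Algebra R B]
    (σ : B →ₗ[R] B) : Prop :=
  σ 1 = 1 ∧ (∀ x y : B, σ (x * y) = σ y * σ x) ∧ (∀ x : B, σ (σ x) = x) ∧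
    ∀ x : B, x * σ x ∈ (algebraMap R B).range

open scoped TensorProduct

/-!
Linearizing `x σ(x) ∈ R` at `x + 1` gives `σ(x) = t(x) - x` with `t(x) ∈ R`, hence `σ² = id`.
For fixed `x`, the defect `y ↦ σ(xy) - σ(y)σ(x)` is an `R`-linear map `U` with values in `R`,
`U(1) = 0` and `U(y) y ∈ R`. Over a local ring `B` is free and `1` has a unit coordinate, say
at `vᵢ`; for `j ≠ i`, comparing coordinates in `U(vⱼ) vⱼ ∈ R` forces `U(vⱼ) = 0`, and then
`U(vᵢ) = 0` because `U(1) = 0`. Vanishing of `U` is a local property, so `U = 0` in general.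
-/

section StandardInvolution

variable {R B : Type*} [CommRing R] [Ring B] [Algebra R B]

theorem commute_of_mem_bot {a : B} (ha : a ∈ (⊥ : Subalgebra R B)) (x : B) : Commute a x := by
  obtain ⟨r, rfl⟩ := Algebra.mem_bot.1 ha
  exact Algebra.commute_algebraMap_left r x

variable (σ : B →ₗ[R] B)

theorem map_eq_self_of_mem_bot (h1 : σ 1 = 1) {a : B} (ha : a ∈ (⊥ : Subalgebra R B)) :
    σ a = a := by
  obtain ⟨r, rfl⟩ := Algebra.mem_bot.1 ha
  rw [Algebra.algebraMap_eq_smul_one, map_smul, h1]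

theorem mul_map_add_mul_map_mem_bot (hnrd : ∀ x, x * σ x ∈ (⊥ : Subalgebra R B)) (x y : B) :
    x * σ y + y * σ x ∈ (⊥ : Subalgebra R B) := by
  have h := sub_mem (sub_mem (hnrd (x + y)) (hnrd x)) (hnrd y)
  rwa [map_add, show (x + y) * (σ x + σ y) - x * σ x - y * σ y = x * σ y + y * σ x by
    noncomm_ring] at h

theorem add_map_mem_bot (h1 : σ 1 = 1) (hnrd : ∀ x, x * σ x ∈ (⊥ : Subalgebra R B)) (x : B) :
    x + σ x ∈ (⊥ : Subalgebra R B) := by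
  simpa [h1] using mul_map_add_mul_map_mem_bot σ hnrd x 1

theorem map_map_eq_self (h1 : σ 1 = 1) (hnrd : ∀ x, x * σ x ∈ (⊥ : Subalgebra R B)) (x : B) :
    σ (σ x) = x := by
  have h := map_eq_self_of_mem_bot σ h1 (add_map_mem_bot σ h1 hnrd x)
  rw [map_add] at h
  exact add_left_cancel (h.trans (add_comm _ _))

def antiDefect (x : B) : B →ₗ[R] B :=
  σ ∘ₗ LinearMap.mulLeft R x - LinearMap.mulRight R (σ x) ∘ₗ σ

theorem antiDefect_apply (x y : B) : antiDefect σ x y = σ (x * y) - σ y * σ x := rfl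

theorem antiDefect_apply_one (h1 : σ 1 = 1) (x : B) : antiDefect σ x 1 = 0 := by
  rw [antiDefect_apply, mul_one, h1, one_mul, sub_self]

theorem antiDefect_apply_mem_bot (h1 : σ 1 = 1) (hnrd : ∀ x, x * σ x ∈ (⊥ : Subalgebra R B))
    (x y : B) : antiDefect σ x y ∈ (⊥ : Subalgebra R B) := by
  have hy := add_map_mem_bot σ h1 hnrd y
  have key : antiDefect σ x y = (x * y + σ (x * y)) - (y + σ y) * (x + σ x)
      + (x * σ y + y * σ x) + ((y + σ y) * x - x * (y + σ y)) := by
    rw [antiDefect_apply]; noncomm_ring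
  rw [key, (commute_of_mem_bot hy x).eq, sub_self, add_zero]
  exact add_mem (sub_mem (add_map_mem_bot σ h1 hnrd _)
    (mul_mem hy (add_map_mem_bot σ h1 hnrd x))) (mul_map_add_mul_map_mem_bot σ hnrd x y)

theorem antiDefect_apply_mul_mem_bot (h1 : σ 1 = 1)
    (hnrd : ∀ x, x * σ x ∈ (⊥ : Subalgebra R B)) (x y : B) :
    antiDefect σ x y * y ∈ (⊥ : Subalgebra R B) := by
  have hxy : ∀ x, antiDefect σ x y * (x * y) ∈ (⊥ : Subalgebra R B) := by
    intro x
    have hnorm : x * y * (σ y * σ x) = y * σ y * (x * σ x) := by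
      rw [show x * y * (σ y * σ x) = x * (y * σ y) * σ x by noncomm_ring,
        (commute_of_mem_bot (hnrd y) x).symm.eq, mul_assoc]
    rw [(commute_of_mem_bot (antiDefect_apply_mem_bot σ h1 hnrd x y) _).eq, antiDefect_apply,
      mul_sub, hnorm]
    exact sub_mem (hnrd _) (mul_mem (hnrd y) (hnrd x))
  have hshift : antiDefect σ (x + 1) y = antiDefect σ x y := by
    simp only [antiDefect_apply, add_mul, one_mul, map_add, h1, mul_add, mul_one]
    abel
  have h := sub_mem (hxy (x + 1)) (hxy x)
  rwa [hshift, ← mul_sub, add_mul, one_mul, add_sub_cancel_left] at h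

end StandardInvolution

theorem smul_eq_zero_of_smul_basis_eq_smul {R M ι : Type*} [CommRing R] [AddCommGroup M]
    [Module R M] (v : Module.Basis ι R M) {e : M} {i j : ι} (hij : i ≠ j)
    (he : IsUnit (v.repr e i)) {ε c : R} (h : ε • v j = c • e) : ε = 0 := by
  classical
  have hi := congrArg (fun m => v.repr m i) h
  have hj := congrArg (fun m => v.repr m j) h
  simp only [map_smul, Finsupp.smul_apply, Module.Basis.repr_self_apply, smul_eq_mul,
    if_neg hij.symm, mul_zero, if_true, mul_one] at hi hj
  rw [hj, (he.mul_left_eq_zero.1 hi.symm), zero_mul]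

section LocalFree

variable {R B : Type*} [CommRing R] [IsLocalRing R] [Ring B] [Algebra R B]

-- Otherwise the `k`-th coordinate `1` of `v k = v k * 1` would lie in the maximal ideal.
theorem exists_isUnit_repr_one [Nontrivial B] {ι : Type*} (v : Module.Basis ι R B) :
    ∃ i, IsUnit (v.repr 1 i) := by
  by_contra! h
  obtain ⟨k⟩ := v.index_nonempty
  have hmem : v.repr (v k * 1) k ∈ IsLocalRing.maximalIdeal R := by
    rw [← v.linearCombination_repr 1, Finsupp.linearCombination_apply, Finsupp.sum,
      Finset.mul_sum]
    simp only [mul_smul_comm, map_sum, map_smul, Finsupp.coe_finsetSum, Finset.sum_apply,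
      Finsupp.smul_apply, smul_eq_mul]
    exact Ideal.sum_mem _ fun i _ => Ideal.mul_mem_right _ _ (h i)
  rw [mul_one, v.repr_self, Finsupp.single_eq_same] at hmem
  exact hmem isUnit_one

theorem LinearMap.eq_zero_of_isLocalRing_of_mem_bot [Module.Free R B] (U : B →ₗ[R] B)
    (h1 : U 1 = 0) (hU : ∀ y, U y ∈ (⊥ : Subalgebra R B))
    (hUy : ∀ y, U y * y ∈ (⊥ : Subalgebra R B)) : U = 0 := by
  cases subsingleton_or_nontrivial B with
  | inl _ => exact Subsingleton.elim _ _
  | inr _ =>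
  let v := Module.Free.chooseBasis R B
  obtain ⟨i, hi⟩ := exists_isUnit_repr_one v
  have hvj : ∀ j, j ≠ i → U (v j) = 0 := by
    intro j hji
    obtain ⟨ε, hε⟩ := Algebra.mem_bot.1 (hU (v j))
    obtain ⟨c, hc⟩ := Algebra.mem_bot.1 (hUy (v j))
    have h : ε • v j = c • 1 := by
      rw [Algebra.smul_def, hε, ← hc, Algebra.algebraMap_eq_smul_one]
    rw [← hε, smul_eq_zero_of_smul_basis_eq_smul v hji.symm hi h, map_zero]
  have hvi : U (v i) = 0 := by
    rw [← v.linearCombination_repr 1, Finsupp.linearCombination_apply, map_finsuppSum,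
      Finsupp.sum_eq_single i (fun j _ hji => by rw [map_smul, hvj j hji, smul_zero])
        (fun _ => by rw [zero_smul, map_zero]), map_smul] at h1
    exact (hi.smul_left_cancel).1 (h1.trans (smul_zero _).symm)
  refine v.ext fun j => ?_
  rcases eq_or_ne j i with rfl | hji
  exacts [hvi, hvj j hji]

end LocalFree

section Localization

variable {R B : Type*} [CommRing R] [Ring B] [Algebra R B]

theorem one_tmul_mem_bot (A : Type*) [CommRing A] [Algebra R A] {b : B}
    (hb : b ∈ (⊥ : Subalgebra R B)) : (1 : A) ⊗ₜ[R] b ∈ (⊥ : Subalgebra A (A ⊗[R] B)) := by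
  obtain ⟨r, rfl⟩ := Algebra.mem_bot.1 hb
  refine Algebra.mem_bot.2 ⟨algebraMap R A r, ?_⟩
  rw [Algebra.TensorProduct.algebraMap_apply, Algebra.algebraMap_self, RingHom.id_apply,
    Algebra.algebraMap_eq_smul_one, Algebra.algebraMap_eq_smul_one, TensorProduct.smul_tmul]

theorem baseChange_mem_bot_of_isLocalization (S : Submonoid R) (A : Type*) [CommRing A]
    [Algebra R A] [IsLocalization S A] (U : B →ₗ[R] B) (hU : ∀ y, U y ∈ (⊥ : Subalgebra R B))
    (hUy : ∀ y, U y * y ∈ (⊥ : Subalgebra R B)) (y : A ⊗[R] B) :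
    U.baseChange A y ∈ (⊥ : Subalgebra A (A ⊗[R] B)) ∧
      U.baseChange A y * y ∈ (⊥ : Subalgebra A (A ⊗[R] B)) := by
  obtain ⟨⟨b, s⟩, hs⟩ := IsLocalizedModule.surj S (TensorProduct.mk R A B 1) y
  obtain ⟨u, hu⟩ := IsLocalization.map_units A s
  dsimp only at hs
  have hy : y = (↑u⁻¹ : A) • (1 : A) ⊗ₜ[R] b := by
    rw [← TensorProduct.mk_apply, ← hs, Submonoid.smul_def, ← algebraMap_smul A (s : R) y, ← hu,
      smul_smul, Units.inv_mul, one_smul]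
  rw [hy, map_smul, LinearMap.baseChange_tmul, smul_mul_smul_comm,
    Algebra.TensorProduct.tmul_mul_tmul, one_mul]
  exact ⟨Subalgebra.smul_mem _ (one_tmul_mem_bot A (hU b)) _,
    Subalgebra.smul_mem _ (one_tmul_mem_bot A (hUy b)) _⟩

variable [Module.Finite R B] [Module.Projective R B]

theorem LinearMap.eq_zero_of_projective_of_mem_bot (U : B →ₗ[R] B) (h1 : U 1 = 0)
    (hU : ∀ y, U y ∈ (⊥ : Subalgebra R B)) (hUy : ∀ y, U y * y ∈ (⊥ : Subalgebra R B)) :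
    U = 0 := by
  refine LinearMap.ext fun b => Module.eq_zero_of_localization_maximal
    (fun P _ => Localization.AtPrime P ⊗[R] B)
    (fun P _ => TensorProduct.mk R (Localization.AtPrime P) B 1) (U b) fun P _ => ?_
  have : Module.Free (Localization.AtPrime P) (Localization.AtPrime P ⊗[R] B) :=
    Module.free_of_flat_of_isLocalRing
  have hloc : U.baseChange (Localization.AtPrime P) = 0 :=
    LinearMap.eq_zero_of_isLocalRing_of_mem_bot _
      (by rw [Algebra.TensorProduct.one_def, LinearMap.baseChange_tmul, h1,
        TensorProduct.tmul_zero])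
      (fun y => (baseChange_mem_bot_of_isLocalization P.primeCompl _ U hU hUy y).1)
      (fun y => (baseChange_mem_bot_of_isLocalization P.primeCompl _ U hU hUy y).2)
  simpa using LinearMap.congr_fun hloc (1 ⊗ₜ b)

end Localization

theorem stmt13_general (R B : Type) [CommRing R] [Ring B] [Algebra R B]
    [Module.Finite R B] [Module.Projective R B]
    (σ : B →ₗ[R] B) (h1 : σ 1 = 1)
    (hnrd : ∀ x : B, x * σ x ∈ (algebraMap R B).range) :
    IsStandardInvolution R σ := by
  have hnrd' : ∀ x, x * σ x ∈ (⊥ : Subalgebra R B) := fun x => Algebra.mem_bot.2 (hnrd x)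
  refine ⟨h1, fun x y => ?_, map_map_eq_self σ h1 hnrd', hnrd⟩
  have hx : antiDefect σ x = 0 := LinearMap.eq_zero_of_projective_of_mem_bot _
    (antiDefect_apply_one σ h1 x) (antiDefect_apply_mem_bot σ h1 hnrd' x)
    (antiDefect_apply_mul_mem_bot σ h1 hnrd' x)
  exact sub_eq_zero.1 (LinearMap.congr_fun hx y)

/-- If `σ : B → B` is an `R`-linear map with `σ(1) = 1` and `x·σ(x) ∈ R` for all `x ∈ B`,
then `σ` is a standard involution on `B` (in particular `σ(xy) = σ(y)σ(x)` and
`σ(σ(x)) = x`). -/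
theorem stmt13 (R B : Type) [CommRing R] [IsNoetherianRing R] [Ring B] [Algebra R B]
    [Module.Finite R B] [Module.Projective R B]
    (hconn : ∀ e : R, IsIdempotentElem e → e = 0 ∨ e = 1)
    (σ : B →ₗ[R] B) (h1 : σ 1 = 1)
    (hnrd : ∀ x : B, x * σ x ∈ (algebraMap R B).range) :
    IsStandardInvolution R σ :=
  stmt13_general R B σ h1 hnrd
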